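/- arXiv:2404.14940 — 5 statements merged into one kernel-verified Lean document; each statement's English description precedes it below -/
import Mathlib

section
/- For every integer d ≥ 0 there exists a triangle-free graph G with a vertex v such that G − v is a forest (i.e., feedback vertex number 1), and G admits no 2-colouring in which every monochromatic component has maximum degree at most d. -/
open SimpleGraph Set

/-- The monochromatic subgraph of `G` under colouring `C`. -/
def monoSubgraph {V α : Type*} (G : SimpleGraph V) (C : V → α) : SimpleGraph V where
  Adj a b := G.Adj a b ∧ C a = C b
  symm := ⟨fun _ _ h => ⟨h.1.symm, h.2.symm⟩⟩
  loopless := ⟨fun a h => G.loopless.irrefl a h.1⟩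

/-- The colouring `C` of `G` has defect at most `d`: every monochromatic component has
maximum degree at most `d` (equivalently, every vertex has at most `d` neighbours of
its own colour). -/
def HasDefect {V α : Type*} (G : SimpleGraph V) (C : V → α) (d : ℕ) : Prop :=
  ∀ v, {w | G.Adj v w ∧ C w = C v}.ncard ≤ d

/-- The colouring `C` of `G` has clustering at most `c`: every monochromatic component
has at most `c` vertices. -/
def HasClustering {V α : Type*} (G : SimpleGraph V) (C : V → α) (c : ℕ) : Prop :=
  ∀ v, {w | (monoSubgraph G C).Reachable v w}.ncard ≤ c

/-- Feedback vertex number at most `k`. -/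
def FvnLE {V : Type*} (G : SimpleGraph V) (k : ℕ) : Prop :=
  ∃ A : Set V, A.Finite ∧ A.ncard ≤ k ∧ (G.induce Aᶜ).IsAcyclic

/-- `H` is a minor of `G`, via branch sets. -/
def IsMinorOf {W V : Type*} (H : SimpleGraph W) (G : SimpleGraph V) : Prop :=
  ∃ B : W → Set V,
    (∀ w, (B w).Nonempty) ∧
    (Pairwise fun w w' => Disjoint (B w) (B w')) ∧
    (∀ w, (G.induce (B w)).Connected) ∧
    (∀ w w', H.Adj w w' → ∃ a ∈ B w, ∃ b ∈ B w', G.Adj a b)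

/-- Treedepth at most `k`: there is a forest (ancestor) partial order `r` of height
at most `k` such that the endpoints of every edge are comparable. -/
def TreedepthLE {V : Type*} (G : SimpleGraph V) (k : ℕ) : Prop :=
  ∃ r : V → V → Prop,
    (∀ v, r v v) ∧
    (∀ a b c, r a b → r b c → r a c) ∧
    (∀ a b, r a b → r b a → a = b) ∧
    (∀ v a b, r a v → r b v → r a b ∨ r b a) ∧
    (∀ v, {u | r u v}.Finite ∧ {u | r u v}.ncard ≤ k) ∧
    (∀ a b, G.Adj a b → r a b ∨ r b a)

/-- Pathwidth at most `k`, via path decompositions. -/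
def PathwidthLE {V : Type*} (G : SimpleGraph V) (k : ℕ) : Prop :=
  ∃ (n : ℕ) (B : Fin n → Set V),
    (∀ v, ∃ i, v ∈ B i) ∧
    (∀ a b, G.Adj a b → ∃ i, a ∈ B i ∧ b ∈ B i) ∧
    (∀ i j l : Fin n, i ≤ j → j ≤ l → ∀ v, v ∈ B i → v ∈ B l → v ∈ B j) ∧
    (∀ i, (B i).ncard ≤ k + 1)

/-- `w` is 2-reachable from `v` with respect to the order `r`. -/
def TwoReach {V : Type*} (G : SimpleGraph V) (r : V → V → Prop) (v w : V) : Prop :=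
  w = v ∨ (r w v ∧ (G.Adj v w ∨ ∃ u, r v u ∧ u ≠ v ∧ G.Adj v u ∧ G.Adj u w))

/-- The 2-strong colouring number `col₂(G)`. -/
noncomputable def col2 {V : Type*} (G : SimpleGraph V) : ℕ :=
  sInf {m | ∃ r : V → V → Prop, IsLinearOrder V r ∧ ∀ v, {w | TwoReach G r v w}.ncard ≤ m}

/-- `G` contains a complete bipartite subgraph `K_{s,t}`. -/
def HasKstSubgraph {V : Type*} (G : SimpleGraph V) (s t : ℕ) : Prop :=
  ∃ (A B : Finset V), Disjoint A B ∧ A.card = s ∧ B.card = t ∧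
    ∀ a ∈ A, ∀ b ∈ B, G.Adj a b

/-- `x` is a prefix of `y`, as nodes of the complete `d`-ary tree of height `n`. -/
def SeqPrefix {n d : ℕ} (x y : Σ i : Fin n, Fin (i : ℕ) → Fin d) : Prop :=
  ∃ h : (x.1 : ℕ) ≤ (y.1 : ℕ), ∀ a : Fin (x.1 : ℕ), y.2 (Fin.castLE h a) = x.2 a

/-- The graph `H^(d)`, on the nodes of the complete `d`-ary tree of height `n`:
on each root–leaf path `(x_1, …, x_n)`, `x_i x_j` is an edge iff `v_i v_j ∈ E(H)`. -/
def HdGraph (n d : ℕ) (H : SimpleGraph (Fin n)) :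
    SimpleGraph (Σ i : Fin n, Fin (i : ℕ) → Fin d) where
  Adj x y := H.Adj x.1 y.1 ∧ (SeqPrefix x y ∨ SeqPrefix y x)
  symm := ⟨fun _ _ h => ⟨h.1.symm, h.2.symm⟩⟩
  loopless := ⟨fun x h => H.loopless.irrefl x.1 h.1⟩

/-- Planarity, via Wagner's characterisation: no `K₅` minor and no `K_{3,3}` minor. -/
def IsPlanarWagner {V : Type*} (G : SimpleGraph V) : Prop :=
  ¬ IsMinorOf (⊤ : SimpleGraph (Fin 5)) G ∧
  ¬ IsMinorOf (completeBipartiteGraph (Fin 3) (Fin 3)) G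

/-- The independence number. -/
noncomputable def indepNum {V : Type*} (H : SimpleGraph V) : ℕ :=
  sSup {m | ∃ s : Finset V, s.card = m ∧ ∀ a ∈ s, ∀ b ∈ s, a ≠ b → ¬ H.Adj a b}

/-! The graph is an apex `v` over a rooted tree of depth two: the root and each of its `k`
children (the hubs) carry `k` further leaves, and `v` is joined to all of these leaves.
Two vertices of a 2-colouring with defect `d` that share more than `2d` neighbours get the
same colour, since each shared neighbour agrees in colour with one of them. With `k = 2d + 1`
the root and all hubs are therefore coloured like `v`, so the root has `k > d` neighbours of
its own colour. The leaves adjacent to `v` are independent, so every triangle would lie in the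
forest `G - v`. -/

namespace SimpleGraph

variable {V : Type*} {G : SimpleGraph V}

/-- A vertex of maximal rank on a cycle has two distinct neighbours of smaller rank on it. -/
theorem isAcyclic_of_rank {α : Type*} [LinearOrder α] (rank : V → α)
    (hne : ∀ ⦃a b⦄, G.Adj a b → rank a ≠ rank b)
    (hlower : ∀ ⦃a b b'⦄, G.Adj a b → G.Adj a b' → rank b < rank a → rank b' < rank a →
      b = b') :
    G.IsAcyclic := by
  classical
  intro u c hc
  obtain ⟨m, hm, hmax⟩ := c.support.toFinset.exists_max_image rank ⟨u, by simp⟩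
  rw [List.mem_toFinset] at hm
  set c' := c.rotate m hm
  have hc' : c'.IsCycle := hc.rotate hm
  have hlt : ∀ ⦃z⦄, z ∈ c'.support → G.Adj m z → rank z < rank m := fun z hz hadj =>
    lt_of_le_of_ne (hmax z (by simpa [c'] using hz)) (hne hadj).symm
  have hsnd := c'.adj_snd hc'.not_nil
  have hpen := (c'.adj_penultimate hc'.not_nil).symm
  exact hc'.snd_ne_penultimate <| hlower hsnd hpen
    (hlt (c'.getVert_mem_support _) hsnd) (hlt (c'.getVert_mem_support _) hpen)

theorem cliqueFree_three_of_isAcyclic_induce_compl_singleton {v : V}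
    (hacyc : (G.induce {v}ᶜ).IsAcyclic)
    (hindep : ∀ ⦃a b⦄, G.Adj v a → G.Adj v b → ¬ G.Adj a b) :
    G.CliqueFree 3 := by
  classical
  rintro t ht
  obtain ⟨a, b, c, hab, hac, hbc, rfl⟩ := is3Clique_iff.mp ht
  by_cases ha : a = v
  · subst ha; exact hindep hab hac hbc
  by_cases hb : b = v
  · subst hb; exact hindep hab.symm hbc hac
  by_cases hc : c = v
  · subst hc; exact hindep hac.symm hbc.symm hab
  have hclique : (G.induce {v}ᶜ).IsNClique 3 {⟨a, ha⟩, ⟨b, hb⟩, ⟨c, hc⟩} :=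
    is3Clique_triple_iff.mpr ⟨hab, hac, hbc⟩
  exact hacyc.cliqueFree le_rfl _ hclique

end SimpleGraph

theorem HasDefect.apply_eq_of_lt_ncard_commonNeighbors {V : Type*} [Finite V]
    {G : SimpleGraph V} {C : V → Fin 2} {d : ℕ} (hC : HasDefect G C d) {u v : V}
    (h : 2 * d < (G.commonNeighbors u v).ncard) : C u = C v := by
  by_contra hne
  have hsplit : G.commonNeighbors u v ⊆
      {w | G.Adj u w ∧ C w = C u} ∪ {w | G.Adj v w ∧ C w = C v} := by
    rintro w ⟨hu, hv⟩
    have hw : C w = C u ∨ C w = C v := by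
      simp only [Fin.ext_iff] at hne ⊢; omega
    exact hw.imp (⟨hu, ·⟩) (⟨hv, ·⟩)
  have := (Set.ncard_le_ncard hsplit).trans (Set.ncard_union_le _ _)
  linarith [hC u, hC v]

/-- `hub none` is the root, adjacent to the hubs `hub (some i)`; `leaf h j` hangs from `hub h`. -/
inductive ApexTreeVertex (k : ℕ) : Type where
  | apex : ApexTreeVertex k
  | hub : Option (Fin k) → ApexTreeVertex k
  | leaf : Option (Fin k) → Fin k → ApexTreeVertex k
  deriving Fintype

namespace ApexTreeVertex

variable {k : ℕ}

def Edge : ApexTreeVertex k → ApexTreeVertex k → Prop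
  | apex, leaf _ _ => True
  | hub h, leaf h' _ => h = h'
  | hub none, hub (some _) => True
  | _, _ => False

def depth : ApexTreeVertex k → ℕ
  | apex => 0
  | hub none => 0
  | hub (some _) => 1
  | leaf none _ => 1
  | leaf (some _) _ => 2

end ApexTreeVertex

open ApexTreeVertex

def apexTree (k : ℕ) : SimpleGraph (ApexTreeVertex k) := SimpleGraph.fromRel Edge

theorem apexTree_induce_isAcyclic (k : ℕ) : ((apexTree k).induce {apex}ᶜ).IsAcyclic := by
  refine isAcyclic_of_rank (fun x => depth x.1) ?_ ?_
  · rintro ⟨a, _⟩ ⟨b, _⟩ hab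
    rcases a with _ | (_ | _) | ⟨_ | _, _⟩ <;> rcases b with _ | (_ | _) | ⟨_ | _, _⟩ <;>
      simp_all [apexTree, Edge, depth]
  · rintro ⟨a, _⟩ ⟨b, hb⟩ ⟨b', hb'⟩ hab hab' hlt hlt'
    rw [Set.mem_compl_singleton_iff] at hb hb'
    rcases a with _ | (_ | _) | ⟨_ | _, _⟩ <;> rcases b with _ | (_ | _) | ⟨_ | _, _⟩ <;>
      rcases b' with _ | (_ | _) | ⟨_ | _, _⟩ <;>
      simp_all [apexTree, Edge, depth]

theorem apexTree_cliqueFree (k : ℕ) : (apexTree k).CliqueFree 3 :=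
  cliqueFree_three_of_isAcyclic_induce_compl_singleton (apexTree_induce_isAcyclic k) <| by
    intro a b ha hb
    rcases a with _ | (_ | _) | ⟨_ | _, _⟩ <;> rcases b with _ | (_ | _) | ⟨_ | _, _⟩ <;>
      simp_all [apexTree, Edge]

theorem apexTree_not_hasDefect {k d : ℕ} (hk : 2 * d < k) (C : ApexTreeVertex k → Fin 2) :
    ¬ HasDefect (apexTree k) C d := by
  intro hC
  have hhub : ∀ h, C (hub h) = C apex := fun h => by
    refine hC.apply_eq_of_lt_ncard_commonNeighbors (hk.trans_le ?_)
    calc k = (Set.range (leaf h)).ncard := by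
          rw [Set.ncard_range_of_injective (fun _ _ => by simp), Nat.card_fin]
      _ ≤ ((apexTree k).commonNeighbors (hub h) apex).ncard := by
          refine Set.ncard_le_ncard ?_
          rintro _ ⟨j, rfl⟩
          simp [apexTree, Edge, mem_commonNeighbors]
  have hroot : k ≤ {w | (apexTree k).Adj (hub none) w ∧ C w = C (hub none)}.ncard :=
    calc k = (Set.range (hub ∘ some)).ncard := by
          rw [Set.ncard_range_of_injective (fun _ _ => by simp), Nat.card_fin]
      _ ≤ _ := by
          refine Set.ncard_le_ncard ?_
          rintro _ ⟨i, rfl⟩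
          simp [apexTree, Edge, hhub]
  linarith [hC (hub none)]

/-- for every `d ≥ 0` there is a triangle-free graph `G` with a vertex `v`
such that `G - v` is a forest, admitting no 2-colouring with defect at most `d`. -/
theorem stmt2 (d : ℕ) :
    ∃ (V : Type) (_ : Fintype V) (G : SimpleGraph V) (v : V),
      G.CliqueFree 3 ∧ (G.induce {v}ᶜ).IsAcyclic ∧
      ∀ C : V → Fin 2, ¬ HasDefect G C d :=
  ⟨ApexTreeVertex (2 * d + 1), inferInstance, apexTree (2 * d + 1), apex,
    apexTree_cliqueFree _, apexTree_induce_isAcyclic _,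
    apexTree_not_hasDefect (Nat.lt_succ_self _)⟩
end

section
/- For every integer c ≥ 1 there exists a graph G with girth exactly 6, feedback vertex number at most 7, and pathwidth at most 8, such that in every 2-colouring of G some monochromatic component has more than c vertices. -/
open SimpleGraph Set

/-! The graph has seven apexes and, for every ordered choice `g` of four of them, a path whose
`i`-th vertex is joined to the apex `g (i mod 4)`. Deleting the apexes leaves disjoint paths;
laid end to end they give a path decomposition whose bags are two consecutive path vertices
plus all apexes. A cycle has to pass through an apex. Two path neighbours of one apex on the
same path are at least four steps apart, and between two distinct apexes a cycle needs at least
two path vertices, so every cycle has length at least 6; the apex `g 0` with the first five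
vertices of the path of `g` is a 6-cycle.

Given a 2-colouring whose monochromatic components have at most `c` vertices, four of the
apexes share a colour `k`; let `g` list them. Every `c + 1` consecutive vertices of the path of
`g` contain a vertex of colour `k`, as otherwise they would form a monochromatic component.
Cut the path into `4c + 1` windows of `c + 1` vertices and pick such a vertex in each: by
pigeonhole `c + 1` of them are joined to the same apex, which has colour `k`, and together
with it they lie in one monochromatic component. -/

theorem isAcyclic_of_injective_of_adj {V : Type*} {G : SimpleGraph V} (f : V → ℕ)
    (hf : Function.Injective f) (hadj : ∀ u v, G.Adj u v → f u + 1 = f v ∨ f v + 1 = f u) :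
    G.IsAcyclic := by
  classical
  intro v c hc
  obtain ⟨b, hb, hmax⟩ := c.support.toFinset.exists_max_image f ⟨v, by simp⟩
  rw [List.mem_toFinset] at hb
  set c' := c.rotate b hb
  have hc' : c'.IsCycle := hc.rotate hb
  -- Both neighbours of `b` on the cycle have `f`-value `f b - 1`, hence coincide.
  have below : ∀ x, G.Adj b x → x ∈ c'.support → f x + 1 = f b := by
    intro x hx hmem
    have := hmax x (by simpa [c'] using hmem)
    rcases hadj b x hx with h | h <;> omega
  have h₁ := below _ (c'.adj_snd hc'.not_nil) (c'.getVert_mem_support 1)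
  have h₂ := below _ (c'.adj_penultimate hc'.not_nil).symm (c'.getVert_mem_support _)
  exact hc'.snd_ne_penultimate (hf (by omega))

section Clustering

variable {V α : Type*} [Finite V] {G : SimpleGraph V} {C : V → α} {c : ℕ}

theorem HasClustering.ncard_adj_eq_color_lt (h : HasClustering G C c) (v : V) :
    {w | G.Adj v w ∧ C w = C v}.ncard < c := by
  have hsub : insert v {w | G.Adj v w ∧ C w = C v} ⊆
      {w | (monoSubgraph G C).Reachable v w} := by
    rintro w (rfl | ⟨hadj, hC⟩)
    · exact Reachable.refl _
    · exact Adj.reachable ⟨hadj, hC.symm⟩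
  have := (Set.ncard_le_ncard hsub (Set.toFinite _)).trans (h v)
  rwa [Set.ncard_insert_of_notMem (fun hv => G.loopless.irrefl _ hv.1) (Set.toFinite _)] at this

theorem HasClustering.exists_color_ne_of_path (h : HasClustering G C c)
    {p : Fin (c + 1) → V} (hp : Function.Injective p)
    (hadj : ∀ t : Fin c, G.Adj (p t.castSucc) (p t.succ)) :
    ∃ t, C (p t) ≠ C (p 0) := by
  by_contra! hmono
  have hreach : ∀ t, (monoSubgraph G C).Reachable (p 0) (p t) := by
    intro t
    induction t using Fin.induction with
    | zero => exact Reachable.refl _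
    | succ t ih => exact ih.trans (Adj.reachable ⟨hadj t, (hmono _).trans (hmono _).symm⟩)
  have hsub : range p ⊆ {w | (monoSubgraph G C).Reachable (p 0) w} := by
    rintro _ ⟨t, rfl⟩
    exact hreach t
  have := (Set.ncard_le_ncard hsub (Set.toFinite _)).trans (h (p 0))
  rw [Set.ncard_range_of_injective hp, Nat.card_eq_fintype_card, Fintype.card_fin] at this
  omega

end Clustering

section PathLayout

variable {α β : Type*} [Fintype α] {m : ℕ} {G : SimpleGraph (α ⊕ β)}

theorem fvnLE_of_pathLayout (e : β ≃ Fin m)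
    (hG : ∀ b b', G.Adj (.inr b) (.inr b') → (e b : ℕ) + 1 = e b' ∨ (e b' : ℕ) + 1 = e b) :
    FvnLE G (Fintype.card α) := by
  refine ⟨range Sum.inl, Set.toFinite _, ?_, ?_⟩
  · rw [Set.ncard_range_of_injective Sum.inl_injective, Nat.card_eq_fintype_card]
  · rw [Set.compl_range_inl]
    refine isAcyclic_of_injective_of_adj
      (fun x => Sum.elim (fun _ => 0) (fun b => (e b : ℕ)) x.1) ?_ ?_
    · rintro ⟨_, b, rfl⟩ ⟨_, b', rfl⟩ h
      simp only [Sum.elim_inr, Fin.val_inj, EmbeddingLike.apply_eq_iff_eq] at h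
      subst h
      rfl
    · rintro ⟨_, b, rfl⟩ ⟨_, b', rfl⟩ h
      exact hG b b' h

theorem pathwidthLE_of_pathLayout [Nonempty β] (e : β ≃ Fin m)
    (hG : ∀ b b', G.Adj (.inr b) (.inr b') → (e b : ℕ) + 1 = e b' ∨ (e b' : ℕ) + 1 = e b) :
    PathwidthLE G (Fintype.card α + 1) := by
  refine ⟨m, fun k => range Sum.inl ∪ Sum.inr '' {b | (e b : ℕ) = k ∨ (e b : ℕ) = k + 1},
    ?_, ?_, ?_, ?_⟩
  · rintro (a | b)
    · exact ⟨e (Classical.arbitrary β), .inl (mem_range_self a)⟩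
    · exact ⟨e b, .inr ⟨b, .inl rfl, rfl⟩⟩
  · rintro (a | b) (a' | b') h
    · exact ⟨e (Classical.arbitrary β), .inl (mem_range_self a), .inl (mem_range_self a')⟩
    · exact ⟨e b', .inl (mem_range_self a), .inr ⟨b', .inl rfl, rfl⟩⟩
    · exact ⟨e b, .inr ⟨b, .inl rfl, rfl⟩, .inl (mem_range_self a')⟩
    · rcases hG b b' h with h' | h'
      · exact ⟨e b, .inr ⟨b, .inl rfl, rfl⟩, .inr ⟨b', .inr h'.symm, rfl⟩⟩
      · exact ⟨e b', .inr ⟨b, .inr h'.symm, rfl⟩, .inr ⟨b', .inl rfl, rfl⟩⟩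
  · rintro i j l hij hjl (a | b) hi hl
    · exact .inl (mem_range_self a)
    · simp only [mem_union, mem_range, reduceCtorEq, exists_false, false_or, mem_image,
        mem_ofPred_eq, Sum.inr.injEq, exists_eq_right] at hi hl ⊢
      rw [Fin.le_def] at hij hjl
      omega
  · intro k
    calc (range Sum.inl ∪ Sum.inr '' {b | (e b : ℕ) = k ∨ (e b : ℕ) = k + 1}).ncard
        ≤ (range (Sum.inl : α → α ⊕ β)).ncard
          + (Sum.inr '' {b | (e b : ℕ) = k ∨ (e b : ℕ) = k + 1} : Set (α ⊕ β)).ncard :=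
          Set.ncard_union_le _ _
      _ ≤ Fintype.card α + ({(k : ℕ), (k : ℕ) + 1} : Set ℕ).ncard := by
          rw [Set.ncard_range_of_injective Sum.inl_injective, Nat.card_eq_fintype_card,
            Set.ncard_image_of_injective _ Sum.inr_injective]
          gcongr
          exact Set.ncard_le_ncard_of_injOn (fun b => (e b : ℕ)) (fun b hb => hb)
            (fun b _ b' _ h => e.injective (Fin.ext h)) (Set.toFinite _)
      _ = Fintype.card α + 1 + 1 := by rw [Set.ncard_pair (by omega)]

end PathLayout

namespace ApexPaths

abbrev Gadget := Fin 4 ↪ Fin 7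

abbrev Vert (n : ℕ) := Fin 7 ⊕ (Gadget × Fin n)

variable {n : ℕ}

def slot (i : Fin n) : Fin 4 := ⟨i % 4, Nat.mod_lt _ (by norm_num)⟩

lemma slot_eq_slot_iff {i j : Fin n} : slot i = slot j ↔ (i : ℕ) % 4 = j % 4 := Fin.ext_iff

def graph (n : ℕ) : SimpleGraph (Vert n) where
  Adj
    | .inl _, .inl _ => False
    | .inl a, .inr (g, i) | .inr (g, i), .inl a => g (slot i) = a
    | .inr (g, i), .inr (h, j) => g = h ∧ ((i : ℕ) + 1 = j ∨ (j : ℕ) + 1 = i)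
  symm := ⟨by rintro (_ | _) (_ | _) <;> simp only <;> grind⟩
  loopless := ⟨by rintro (_ | _) <;> simp⟩

@[simp] lemma graph_adj_inl_inl {a b : Fin 7} : ¬ (graph n).Adj (.inl a) (.inl b) := id

@[simp] lemma graph_adj_inl_inr {a g i} : (graph n).Adj (.inl a) (.inr (g, i)) ↔ g (slot i) = a :=
  .rfl

@[simp] lemma graph_adj_inr_inl {a g i} : (graph n).Adj (.inr (g, i)) (.inl a) ↔ g (slot i) = a :=
  .rfl

@[simp] lemma graph_adj_inr_inr {g i h j} : (graph n).Adj (.inr (g, i)) (.inr (h, j)) ↔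
    g = h ∧ ((i : ℕ) + 1 = j ∨ (j : ℕ) + 1 = i) :=
  .rfl

lemma no_triangle {x₀ x₁ x₂ : Vert n} (h₀ : (graph n).Adj x₀ x₁) (h₁ : (graph n).Adj x₁ x₂)
    (h₂ : (graph n).Adj x₂ x₀) : False := by
  rcases x₀ with _ | ⟨_, _⟩ <;> rcases x₁ with _ | ⟨_, _⟩ <;> rcases x₂ with _ | ⟨_, _⟩ <;>
    simp only [graph_adj_inl_inl, graph_adj_inl_inr, graph_adj_inr_inl, graph_adj_inr_inr] at * <;>
    grind [slot_eq_slot_iff, EmbeddingLike.apply_eq_iff_eq]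

lemma no_cycle4 {x₀ x₁ x₂ x₃ : Vert n} (h₀ : (graph n).Adj x₀ x₁) (h₁ : (graph n).Adj x₁ x₂)
    (h₂ : (graph n).Adj x₂ x₃) (h₃ : (graph n).Adj x₃ x₀) (h₀₂ : x₀ ≠ x₂) (h₁₃ : x₁ ≠ x₃) :
    False := by
  rcases x₀ with _ | ⟨_, _⟩ <;> rcases x₁ with _ | ⟨_, _⟩ <;> rcases x₂ with _ | ⟨_, _⟩ <;>
    rcases x₃ with _ | ⟨_, _⟩ <;>
    simp only [graph_adj_inl_inl, graph_adj_inl_inr, graph_adj_inr_inl, graph_adj_inr_inr] at * <;>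
    grind [slot_eq_slot_iff, EmbeddingLike.apply_eq_iff_eq]

lemma no_closedWalk5 {x₀ x₁ x₂ x₃ x₄ : Vert n} (h₀ : (graph n).Adj x₀ x₁)
    (h₁ : (graph n).Adj x₁ x₂) (h₂ : (graph n).Adj x₂ x₃) (h₃ : (graph n).Adj x₃ x₄)
    (h₄ : (graph n).Adj x₄ x₀) : False := by
  rcases x₀ with _ | ⟨_, _⟩ <;> rcases x₁ with _ | ⟨_, _⟩ <;> rcases x₂ with _ | ⟨_, _⟩ <;>
    rcases x₃ with _ | ⟨_, _⟩ <;> rcases x₄ with _ | ⟨_, _⟩ <;>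
    simp only [graph_adj_inl_inl, graph_adj_inl_inr, graph_adj_inr_inl, graph_adj_inr_inr] at * <;>
    grind [slot_eq_slot_iff, EmbeddingLike.apply_eq_iff_eq]

lemma six_le_length_of_isCycle {u : Vert n} {w : (graph n).Walk u u} (hw : w.IsCycle) :
    6 ≤ w.length := by
  by_contra! hlt
  have adj : ∀ i < w.length, (graph n).Adj (w.getVert i) (w.getVert (i + 1)) :=
    fun i hi => w.adj_getVert_succ hi
  have ne : ∀ i j, i < j → j < w.length → w.getVert i ≠ w.getVert j := fun i j hij hj h => by
    have := hw.getVert_injOn' (by simp; omega) (by simp; omega) h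
    omega
  have hlast : w.getVert w.length = w.getVert 0 := by simp
  have h3 := hw.three_le_length
  interval_cases hl : w.length
  · exact no_triangle (adj 0 (by omega)) (adj 1 (by omega)) (hlast ▸ adj 2 (by omega))
  · exact no_cycle4 (adj 0 (by omega)) (adj 1 (by omega)) (adj 2 (by omega))
      (hlast ▸ adj 3 (by omega)) (ne 0 2 (by omega) (by omega)) (ne 1 3 (by omega) (by omega))
  · exact no_closedWalk5 (adj 0 (by omega)) (adj 1 (by omega)) (adj 2 (by omega))
      (adj 3 (by omega)) (hlast ▸ adj 4 (by omega))

def sixCycle (hn : 5 ≤ n) : (graph n).Walk (.inl 0) (.inl 0) :=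
  .cons (v := .inr (Fin.castLEEmb (by norm_num), ⟨0, by omega⟩)) (by simp [slot]) <|
  .cons (v := .inr (Fin.castLEEmb (by norm_num), ⟨1, by omega⟩)) (by simp) <|
  .cons (v := .inr (Fin.castLEEmb (by norm_num), ⟨2, by omega⟩)) (by simp) <|
  .cons (v := .inr (Fin.castLEEmb (by norm_num), ⟨3, by omega⟩)) (by simp) <|
  .cons (v := .inr (Fin.castLEEmb (by norm_num), ⟨4, by omega⟩)) (by simp) <|
  .cons (by simp [slot]) .nil

lemma sixCycle_isCycle (hn : 5 ≤ n) : (sixCycle hn).IsCycle := by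
  simp [sixCycle, Walk.cons_isCycle_iff, Walk.isPath_def]

lemma egirth_eq_six (hn : 5 ≤ n) : (graph n).egirth = 6 :=
  le_antisymm ((egirth_le_length (sixCycle_isCycle hn)).trans_eq rfl)
    (le_egirth.2 fun _ _ hw => mod_cast six_le_length_of_isCycle hw)

noncomputable def layout (n : ℕ) : Gadget × Fin n ≃ Fin (Fintype.card Gadget * n) :=
  (Equiv.prodCongr (Fintype.equivFin Gadget) (Equiv.refl _)).trans finProdFinEquiv

lemma layout_adj (b b' : Gadget × Fin n) (hadj : (graph n).Adj (.inr b) (.inr b')) :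
    (layout n b : ℕ) + 1 = layout n b' ∨ (layout n b' : ℕ) + 1 = layout n b := by
  obtain ⟨g, i⟩ := b
  obtain ⟨_, j⟩ := b'
  obtain ⟨rfl, hij⟩ := hadj
  simp only [layout, Equiv.trans_apply, Equiv.prodCongr_apply, Prod.map, Equiv.refl_apply,
    finProdFinEquiv_apply_val]
  omega

lemma exists_monochromatic_gadget (C : Fin 7 → Fin 2) :
    ∃ (k : Fin 2) (g : Gadget), ∀ i, C (g i) = k := by
  obtain ⟨k, hk⟩ := Fintype.exists_lt_card_fiber_of_mul_lt_card C (n := 3) (by simp)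
  obtain ⟨g⟩ : Nonempty (Fin 4 ↪ {a // C a = k}) := Function.Embedding.nonempty_of_card_le
    (by simp only [Fintype.card_subtype, Fintype.card_fin]; omega)
  exact ⟨k, g.trans (Function.Embedding.subtype _), fun i => (g i).2⟩

theorem not_hasClustering {c : ℕ} (C : Vert ((4 * c + 1) * (c + 1)) → Fin 2) :
    ¬ HasClustering (graph _) C c := by
  intro h
  obtain ⟨k, g, hg⟩ := exists_monochromatic_gadget (C ∘ Sum.inl)
  -- the vertex `t + (c + 1) j`, i.e. the `t`-th vertex of the `j`-th window, of the path of `g`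
  let pos (j : Fin (4 * c + 1)) (t : Fin (c + 1)) : Vert ((4 * c + 1) * (c + 1)) :=
    .inr (g, finProdFinEquiv (j, t))
  have hpos : ∀ j, ∃ t, C (pos j t) = k := by
    intro j
    obtain ⟨t, ht⟩ := h.exists_color_ne_of_path (p := pos j)
      (fun t t' htt' => by simpa [pos] using htt')
      (fun t => by
        simp only [pos, graph_adj_inr_inr, finProdFinEquiv_apply_val, Fin.val_castSucc,
          Fin.val_succ, true_and]
        omega)
    by_cases h0 : C (pos j 0) = k
    · exact ⟨0, h0⟩
    · exact ⟨t, by omega⟩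
  choose t ht using hpos
  obtain ⟨y, hy⟩ := Fintype.exists_lt_card_fiber_of_mul_lt_card
    (fun j => slot (finProdFinEquiv (j, t j))) (n := c) (by simp)
  have hle : (Finset.univ.filter fun j => slot (finProdFinEquiv (j, t j)) = y).card ≤
      {w | (graph _).Adj (.inl (g y)) w ∧ C w = C (.inl (g y))}.ncard := by
    rw [← Set.ncard_coe_finset]
    refine Set.ncard_le_ncard_of_injOn (fun j => pos j (t j)) ?_ ?_ (Set.toFinite _)
    · intro j hj
      simp only [Finset.coe_filter, Finset.mem_univ, true_and, mem_ofPred_eq] at hj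
      exact ⟨by simp [pos, hj], (ht j).trans (hg y).symm⟩
    · intro j _ j' _ hjj'
      simp only [pos, Sum.inr.injEq, Prod.mk.injEq, EmbeddingLike.apply_eq_iff_eq,
        true_and] at hjj'
      exact hjj'.1
  have := h.ncard_adj_eq_color_lt (.inl (g y))
  omega

end ApexPaths

/-- for every `c ≥ 1` there is a graph with girth exactly 6, feedback
vertex number at most 7 and pathwidth at most 8, with no 2-colouring of clustering `c`. -/
theorem stmt3 (c : ℕ) (hc : 1 ≤ c) :
    ∃ (V : Type) (_ : Fintype V) (G : SimpleGraph V),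
      G.egirth = 6 ∧ FvnLE G 7 ∧ PathwidthLE G 8 ∧
      ∀ C : V → Fin 2, ¬ HasClustering G C c := by
  have hn : 5 ≤ (4 * c + 1) * (c + 1) := by nlinarith
  have : Nonempty (ApexPaths.Gadget × Fin ((4 * c + 1) * (c + 1))) :=
    ⟨(Fin.castLEEmb (by norm_num), ⟨0, by omega⟩)⟩
  refine ⟨ApexPaths.Vert ((4 * c + 1) * (c + 1)), inferInstance, ApexPaths.graph _,
    ApexPaths.egirth_eq_six hn, ?_, ?_, ApexPaths.not_hasClustering⟩
  · simpa using fvnLE_of_pathLayout (ApexPaths.layout _) ApexPaths.layout_adj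
  · simpa using pathwidthLE_of_pathLayout (ApexPaths.layout _) ApexPaths.layout_adj
end

section
/- Every graph G with feedback vertex number at most k and girth at least 7 admits a 2-colouring in which every monochromatic component has at most C(k,2) + k + 1 vertices. -/
open SimpleGraph Set

/-!
Let `A` be a feedback vertex set with `|A| ≤ k`, so that `F = G - A` is a forest, and root every
component of `F`. Colour `A` with `0`, the vertices of `F` adjacent to `A` with `1`, and every
other vertex of `F` opposite to its parent. Then no monochromatic edge joins `A` to `F`, so
components inside `A` have at most `k` vertices, and a monochromatic edge of `F` joins a vertex
adjacent to `A` to its parent. So a monochromatic component inside `F` is a subtree with a top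
vertex `t`, all of whose other vertices have a neighbour in `A`. Send such a vertex `w` to the `A`-neighbours of `w` and of its parent (only the
first when the parent is `t`): two vertices sent to the same pair would close a cycle of length at
most `6`, so the component has at most `C(k,2) + k + 1` vertices.
-/

namespace SimpleGraph

variable {V : Type*}

section Girth

variable {G : SimpleGraph V}

lemma egirth_le_three {a b c : V} (hab : G.Adj a b) (hbc : G.Adj b c) (hca : G.Adj c a) :
    G.egirth ≤ 3 := by
  have := hab.ne; have := hbc.ne; have := hca.ne
  let w : G.Walk a a := .cons hab <| .cons hbc <| .cons hca .nil
  have hw : w.IsCycle :=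
    { edges_nodup := by simp [w]; aesop
      ne_nil := by simp [w]
      support_nodup := by simp [w]; aesop }
  exact egirth_le_length hw

lemma egirth_le_four {a b c d : V} (hab : G.Adj a b) (hbc : G.Adj b c) (hcd : G.Adj c d)
    (hda : G.Adj d a) (hac : a ≠ c) (hbd : b ≠ d) : G.egirth ≤ 4 := by
  have := hab.ne; have := hbc.ne; have := hcd.ne; have := hda.ne
  let w : G.Walk a a := .cons hab <| .cons hbc <| .cons hcd <| .cons hda .nil
  have hw : w.IsCycle :=
    { edges_nodup := by simp [w]; aesop
      ne_nil := by simp [w]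
      support_nodup := by simp [w]; aesop }
  exact egirth_le_length hw

lemma egirth_le_six {a b c d e f : V} (hab : G.Adj a b) (hbc : G.Adj b c) (hcd : G.Adj c d)
    (hde : G.Adj d e) (hef : G.Adj e f) (hfa : G.Adj f a) (hac : a ≠ c) (had : a ≠ d)
    (hae : a ≠ e) (hbd : b ≠ d) (hbe : b ≠ e) (hbf : b ≠ f) (hce : c ≠ e) (hcf : c ≠ f)
    (hdf : d ≠ f) : G.egirth ≤ 6 := by
  have := hab.ne; have := hbc.ne; have := hcd.ne; have := hde.ne; have := hef.ne; have := hfa.ne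
  let w : G.Walk a a :=
    .cons hab <| .cons hbc <| .cons hcd <| .cons hde <| .cons hef <| .cons hfa .nil
  have hw : w.IsCycle :=
    { edges_nodup := by simp [w]; aesop
      ne_nil := by simp [w]
      support_nodup := by simp [w]; aesop }
  exact egirth_le_length hw

end Girth

lemma Reachable.of_forall_adj_imp {G : SimpleGraph V} {P : V → Prop}
    (h : ∀ x y, G.Adj x y → P x → P y) {x y : V} (hxy : G.Reachable x y) (hx : P x) : P y := by
  obtain ⟨p⟩ := hxy
  induction p with
  | nil => exact hx
  | cons hadj _ ih => exact ih (h _ _ hadj hx)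

lemma isAcyclic_spanningCoe {s : Set V} {H : SimpleGraph s} (hH : H.IsAcyclic) :
    H.spanningCoe.IsAcyclic := by
  intro v c hc
  have hs : ∀ x ∈ c.support, x ∈ s := by
    intro x hx
    have htail : x ∈ c.support.tail := by
      rcases (Walk.mem_support_iff c).mp hx with rfl | hx
      · exact Walk.end_mem_tail_support hc.not_nil
      · exact hx
    rw [← Walk.map_snd_darts, List.mem_map] at htail
    obtain ⟨d, -, rfl⟩ := htail
    obtain ⟨-, -, b, -, -, hb⟩ := d.adj
    exact hb ▸ b.2
  have hH' : (H.spanningCoe.induce s).IsAcyclic := by rwa [induce_spanningCoe]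
  refine hH' (c.induce s hs) ((Walk.isCycle_map_iff_of_injective
    (f := (Embedding.induce (G := H.spanningCoe) s).toHom) Subtype.val_injective).mp ?_)
  rwa [Walk.map_induce]

section RootedForest

variable {F : SimpleGraph V}

lemma IsAcyclic.support_concat_or_support_concat (hF : F.IsAcyclic) {u v w : V}
    {p : F.Walk u v} {q : F.Walk u w} (hp : p.IsPath) (hq : q.IsPath) (hadj : F.Adj v w) :
    q.support = p.support ++ [w] ∨ p.support = q.support ++ [v] := by
  classical
  by_cases hv : v ∈ q.support
  · left
    rw [hF.path_concat hp hq hadj hv, Walk.support_concat]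
  · right
    have hw := hF.mem_support_of_ne_mem_support_of_adj_of_isPath hp hq hadj hv
    rw [hF.path_concat hq hp hadj.symm hw, Walk.support_concat]

lemma IsAcyclic.length_lt_of_mem_support (hF : F.IsAcyclic) {u v w : V} {p : F.Walk u v}
    {q : F.Walk u w} (hp : p.IsPath) (hq : q.IsPath) (hv : v ∈ q.support) (hvw : v ≠ w) :
    p.length < q.length := by
  classical
  have : p = q.takeUntil v hv :=
    congrArg Subtype.val ((hF.subsingleton_path u v).elim ⟨p, hp⟩ ⟨_, hq.takeUntil hv⟩)
  exact this ▸ Walk.length_takeUntil_lt_length hv hvw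

variable (F) in
open Classical in
noncomputable def rootPath (x : V) : F.Path (F.connectedComponentMk x).out x :=
  (ConnectedComponent.exact (Quot.out_eq (F.connectedComponentMk x))).some.toPath

variable (F) in
noncomputable def ancestors (x : V) : List V := (F.rootPath x).1.support

lemma mem_ancestors_self (x : V) : x ∈ F.ancestors x := (F.rootPath x).1.end_mem_support

lemma rootPath_copy_isPath {x y : V} (h : F.Reachable x y) :
    ((F.rootPath x).1.copy (congrArg Quot.out (ConnectedComponent.sound h)) rfl).IsPath :=
  (Walk.isPath_copy _ _ _).mpr (F.rootPath x).2

lemma ancestors_eq_append_of_adj (hF : F.IsAcyclic) {x y : V} (h : F.Adj x y) :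
    F.ancestors y = F.ancestors x ++ [y] ∨ F.ancestors x = F.ancestors y ++ [x] := by
  simpa only [ancestors, Walk.support_copy] using
    hF.support_concat_or_support_concat (rootPath_copy_isPath h.reachable) (F.rootPath y).2 h

lemma length_ancestors_lt (hF : F.IsAcyclic) {x y : V} (hx : x ∈ F.ancestors y) (hxy : x ≠ y) :
    (F.ancestors x).length < (F.ancestors y).length := by
  classical
  have hr : F.Reachable x y := ⟨(F.rootPath y).1.dropUntil x hx⟩
  simpa [ancestors, Walk.length_support] using
    hF.length_lt_of_mem_support (rootPath_copy_isPath hr) (F.rootPath y).2 hx hxy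

open Classical in
variable (F) in
noncomputable def unmarkedRun (S : Set V) (x : V) : ℕ :=
  ((F.ancestors x).reverse.takeWhile fun y => decide (y ∉ S)).length

lemma unmarkedRun_eq_zero {S : Set V} {x : V} (hx : x ∈ S) : F.unmarkedRun S x = 0 := by
  have : (F.ancestors x).reverse = x :: (F.rootPath x).1.reverse.support.tail := by
    rw [ancestors, ← Walk.support_reverse]
    exact (Walk.cons_tail_support _).symm
  simp [unmarkedRun, this, hx]

lemma unmarkedRun_eq_succ {S : Set V} {u w : V} (hw : w ∉ S)
    (h : F.ancestors w = F.ancestors u ++ [w]) : F.unmarkedRun S w = F.unmarkedRun S u + 1 := by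
  simp [unmarkedRun, h, hw]

end RootedForest

section AnchoredTree

variable {G : SimpleGraph V}

structure IsAnchoredTree (G : SimpleGraph V) (A U : Set V) (t : V) (par nbr : V → V)
    (depth : V → ℕ) : Prop where
  root_mem : t ∈ U
  disjoint : Disjoint U A
  par_mem : ∀ w ∈ U, w ≠ t → par w ∈ U
  adj_par : ∀ w ∈ U, w ≠ t → G.Adj (par w) w
  depth_par_lt : ∀ w ∈ U, w ≠ t → depth (par w) < depth w
  nbr_mem : ∀ w ∈ U, w ≠ t → nbr w ∈ A
  adj_nbr : ∀ w ∈ U, w ≠ t → G.Adj w (nbr w)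

namespace IsAnchoredTree

variable {A U : Set V} {t : V} {par nbr : V → V} {depth : V → ℕ} {w w' : V}

lemma nbr_par_ne_nbr (hT : IsAnchoredTree G A U t par nbr depth) (hg : (7 : ℕ∞) ≤ G.egirth)
    (hw : w ∈ U) (hwt : w ≠ t) (hpt : par w ≠ t) : nbr (par w) ≠ nbr w := by
  intro h
  have hpa := hT.adj_nbr _ (hT.par_mem w hw hwt) hpt
  exact absurd (hg.trans (egirth_le_three (hT.adj_par w hw hwt) (hT.adj_nbr w hw hwt)
    (h ▸ hpa.symm))) (by norm_num)

lemma eq_of_par_eq_root (hT : IsAnchoredTree G A U t par nbr depth) (hg : (7 : ℕ∞) ≤ G.egirth)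
    (hw : w ∈ U) (hwt : w ≠ t) (hw' : w' ∈ U) (hw't : w' ≠ t) (hp : par w = t)
    (hp' : par w' = t) (h : nbr w = nbr w') : w = w' := by
  by_contra hne
  have htw := hT.adj_par w hw hwt
  have htw' := hT.adj_par w' hw' hw't
  rw [hp] at htw
  rw [hp'] at htw'
  exact absurd (hg.trans (egirth_le_four htw (hT.adj_nbr w hw hwt)
    (h ▸ (hT.adj_nbr w' hw' hw't).symm) htw'.symm
    (hT.disjoint.ne_of_mem hT.root_mem (hT.nbr_mem w hw hwt)) hne)) (by norm_num)

lemma eq_of_nbr_eq_of_nbr_par_eq (hT : IsAnchoredTree G A U t par nbr depth)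
    (hg : (7 : ℕ∞) ≤ G.egirth) (hw : w ∈ U) (hwt : w ≠ t) (hw' : w' ∈ U) (hw't : w' ≠ t)
    (hpt : par w ≠ t) (hp't : par w' ≠ t) (hb : nbr w = nbr w')
    (ha : nbr (par w) = nbr (par w')) : w = w' := by
  by_contra hne
  have hpU := hT.par_mem w hw hwt
  have hp'U := hT.par_mem w' hw' hw't
  have hab := hT.nbr_par_ne_nbr hg hw hwt hpt
  have hpw := hT.adj_par w hw hwt
  have hp'w' := hT.adj_par w' hw' hw't
  have hwb := hT.adj_nbr w hw hwt
  have hbw' : G.Adj (nbr w) w' := hb ▸ (hT.adj_nbr w' hw' hw't).symm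
  have hpa := hT.adj_nbr _ hpU hpt
  have hp'a : G.Adj (par w') (nbr (par w)) := ha ▸ hT.adj_nbr _ hp'U hp't
  have hbA := hT.nbr_mem w hw hwt
  have haA := hT.nbr_mem _ hpU hpt
  by_cases hpp : par w = par w'
  · exact absurd (hg.trans (egirth_le_four hpw hwb hbw' (hpp ▸ hp'w').symm
      (hT.disjoint.ne_of_mem hpU hbA) hne)) (by norm_num)
  by_cases hwp' : w = par w'
  · exact hab (by rw [ha, ← hwp', hb])
  by_cases hpw' : par w = w'
  · exact hab (by rw [hpw', hb])
  exact absurd (hg.trans (egirth_le_six hwb hbw' hp'w'.symm hp'a hpa.symm hpw hne hwp'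
    (hT.disjoint.ne_of_mem hw haA) (hT.disjoint.ne_of_mem hp'U hbA).symm hab.symm
    (hT.disjoint.ne_of_mem hpU hbA).symm (hT.disjoint.ne_of_mem hw' haA) (Ne.symm hpw')
    (Ne.symm hpp))) (by norm_num)

lemma eq_of_nbr_eq_nbr_par (hT : IsAnchoredTree G A U t par nbr depth)
    (hg : (7 : ℕ∞) ≤ G.egirth) (hw : w ∈ U) (hwt : w ≠ t) (hw' : w' ∈ U) (hw't : w' ≠ t)
    (hpt : par w ≠ t) (hp't : par w' ≠ t) (hb : nbr w = nbr (par w'))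
    (ha : nbr (par w) = nbr w') : w = w' := by
  by_contra hne
  have hpU := hT.par_mem w hw hwt
  have hp'U := hT.par_mem w' hw' hw't
  have hab := hT.nbr_par_ne_nbr hg hw hwt hpt
  have hpw := hT.adj_par w hw hwt
  have hp'w' := hT.adj_par w' hw' hw't
  have hwb := hT.adj_nbr w hw hwt
  have hbp' : G.Adj (nbr w) (par w') := hb ▸ (hT.adj_nbr _ hp'U hp't).symm
  have hpa := hT.adj_nbr _ hpU hpt
  have hw'a : G.Adj w' (nbr (par w)) := ha ▸ hT.adj_nbr w' hw' hw't
  have hbA := hT.nbr_mem w hw hwt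
  have haA := hT.nbr_mem _ hpU hpt
  by_cases hpp : par w = par w'
  · exact hab (by rw [hpp, hb])
  by_cases hwp' : w = par w'
  · by_cases hpw' : par w = w'
    · have hdw := hT.depth_par_lt w hw hwt
      have hdw' := hT.depth_par_lt w' hw' hw't
      rw [hpw'] at hdw
      rw [← hwp'] at hdw'
      omega
    exact absurd (hg.trans (egirth_le_four hpw (hwp' ▸ hp'w') hw'a hpa.symm hpw'
      (hT.disjoint.ne_of_mem hw haA))) (by norm_num)
  by_cases hpw' : par w = w'
  · exact absurd (hg.trans (egirth_le_four hp'w' (hpw' ▸ hpw) hwb hbp' (Ne.symm hwp')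
      (hT.disjoint.ne_of_mem hw' hbA))) (by norm_num)
  exact absurd (hg.trans (egirth_le_six hwb hbp' hp'w' hw'a hpa.symm hpw hwp' hne
    (hT.disjoint.ne_of_mem hw haA) (hT.disjoint.ne_of_mem hw' hbA).symm hab.symm
    (hT.disjoint.ne_of_mem hpU hbA).symm (hT.disjoint.ne_of_mem hp'U haA) (Ne.symm hpp)
    (Ne.symm hpw'))) (by norm_num)

open Classical in
noncomputable def anchorPair (t : V) (par nbr : V → V) (w : V) : Sym2 V :=
  if par w = t then s(nbr w, nbr w) else s(nbr (par w), nbr w)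

lemma injOn_anchorPair (hT : IsAnchoredTree G A U t par nbr depth) (hg : (7 : ℕ∞) ≤ G.egirth) :
    InjOn (anchorPair t par nbr) (U \ {t}) := by
  rintro w ⟨hw, hwt⟩ w' ⟨hw', hw't⟩ h
  rw [mem_singleton_iff] at hwt hw't
  have diag {x y z : V} (h : s(x, x) = s(y, z)) : y = z :=
    Sym2.mk_isDiag_iff.mp (h ▸ Sym2.mk_isDiag_iff.mpr rfl)
  unfold anchorPair at h
  split_ifs at h with hp hp' hp'
  · exact hT.eq_of_par_eq_root hg hw hwt hw' hw't hp hp' (by simpa using h)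
  · exact absurd (diag h) (hT.nbr_par_ne_nbr hg hw' hw't hp')
  · exact absurd (diag h.symm) (hT.nbr_par_ne_nbr hg hw hwt hp)
  · rcases Sym2.eq_iff.mp h with ⟨ha, hb⟩ | ⟨ha, hb⟩
    · exact hT.eq_of_nbr_eq_of_nbr_par_eq hg hw hwt hw' hw't hp hp' hb ha
    · exact hT.eq_of_nbr_eq_nbr_par hg hw hwt hw' hw't hp hp' hb ha

lemma ncard_le (hT : IsAnchoredTree G A U t par nbr depth) (hg : (7 : ℕ∞) ≤ G.egirth)
    (hA : A.Finite) : U.ncard ≤ A.ncard.choose 2 + A.ncard + 1 := by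
  have hmaps : ∀ w ∈ U \ {t}, anchorPair t par nbr w ∈ (hA.toFinset.sym2 : Set (Sym2 V)) := by
    rintro w ⟨hw, hwt⟩
    rw [mem_singleton_iff] at hwt
    have hb := hT.nbr_mem w hw hwt
    unfold anchorPair
    split_ifs with hp
    · simpa using hb
    · simpa [hb] using hT.nbr_mem _ (hT.par_mem w hw hwt) hp
  calc U.ncard = (insert t (U \ {t})).ncard := by
        rw [insert_sdiff_singleton, insert_eq_of_mem hT.root_mem]
    _ ≤ (U \ {t}).ncard + 1 := ncard_insert_le _ _
    _ ≤ (hA.toFinset.sym2 : Set (Sym2 V)).ncard + 1 := by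
        gcongr
        exact ncard_le_ncard_of_injOn _ hmaps (hT.injOn_anchorPair hg) (Finset.finite_toSet _)
    _ = A.ncard.choose 2 + A.ncard + 1 := by
        rw [ncard_coe_finset, Finset.card_sym2, ← ncard_eq_toFinset_card _ hA,
          Nat.choose_succ_succ', Nat.choose_one_right, add_comm A.ncard]

end IsAnchoredTree

end AnchoredTree

section FvsColoring

variable {G : SimpleGraph V} {A : Set V}

open Classical in
/-- Colour `0` on `A`; on the forest `G - A`, colour `1` at vertices adjacent to `A`, and at any
other vertex the colour opposite to that of its parent. -/
noncomputable def fvsColoring (G : SimpleGraph V) (A : Set V) (v : V) : Fin 2 :=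
  if v ∉ A ∧ Even ((G.induce Aᶜ).spanningCoe.unmarkedRun {x | ∃ a ∈ A, G.Adj x a} v) then 1 else 0

lemma fvsColoring_of_mem {v : V} (hv : v ∈ A) : fvsColoring G A v = 0 := by
  simp [fvsColoring, hv]

lemma fvsColoring_of_adj {v a : V} (hv : v ∉ A) (ha : a ∈ A) (h : G.Adj v a) :
    fvsColoring G A v = 1 := by
  simp [fvsColoring, hv, unmarkedRun_eq_zero (show v ∈ {x | ∃ a ∈ A, G.Adj x a} from ⟨a, ha, h⟩)]

lemma fvsColoring_ne_of_ancestors_eq {u w : V} (hu : u ∉ A) (hw : w ∉ A)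
    (hwA : ¬ ∃ a ∈ A, G.Adj w a)
    (h : (G.induce Aᶜ).spanningCoe.ancestors w = (G.induce Aᶜ).spanningCoe.ancestors u ++ [w]) :
    fvsColoring G A w ≠ fvsColoring G A u := by
  simp only [fvsColoring, hu, hw, not_false_eq_true, true_and,
    unmarkedRun_eq_succ (show w ∉ {x | ∃ a ∈ A, G.Adj x a} from hwA) h, Nat.even_add_one]
  split_ifs <;> simp_all

lemma mem_iff_mem_of_monoAdj {x y : V} (h : (monoSubgraph G (fvsColoring G A)).Adj x y) :
    x ∈ A ↔ y ∈ A := by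
  have key {x y : V} (h : (monoSubgraph G (fvsColoring G A)).Adj x y) (hx : x ∈ A) : y ∈ A := by
    by_contra hy
    have := h.2
    rw [fvsColoring_of_mem hx, fvsColoring_of_adj hy hx h.1.symm] at this
    exact absurd this (by decide)
  exact ⟨key h, key h.symm⟩

lemma mem_iff_mem_of_monoReachable {v w : V}
    (h : (monoSubgraph G (fvsColoring G A)).Reachable v w) : v ∈ A ↔ w ∈ A :=
  h.of_forall_adj_imp (P := fun w => v ∈ A ↔ w ∈ A)
    (fun _ _ hxy hx => hx.trans (mem_iff_mem_of_monoAdj hxy)) Iff.rfl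

lemma spanningCoe_adj_of_monoAdj {x y : V} (h : (monoSubgraph G (fvsColoring G A)).Adj x y)
    (hx : x ∉ A) : (G.induce Aᶜ).spanningCoe.Adj x y :=
  ⟨h.1.ne, ⟨x, hx⟩, ⟨y, mt (mem_iff_mem_of_monoAdj h).mpr hx⟩, h.1, rfl, rfl⟩

lemma exists_monoAdj_parent (hF : (G.induce Aᶜ).IsAcyclic) {w t : V} (hw : w ∉ A)
    (hwt : (monoSubgraph G (fvsColoring G A)).Reachable w t) (hne : w ≠ t)
    (hdepth : ((G.induce Aᶜ).spanningCoe.ancestors t).length ≤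
      ((G.induce Aᶜ).spanningCoe.ancestors w).length) :
    ∃ u, (monoSubgraph G (fvsColoring G A)).Adj u w ∧
      (G.induce Aᶜ).spanningCoe.ancestors w = (G.induce Aᶜ).spanningCoe.ancestors u ++ [w] := by
  by_contra! hno
  have hF' := isAcyclic_spanningCoe hF
  -- Otherwise `w` would be an ancestor of every vertex of its component, `t` included.
  have hclosed : ∀ x y, (monoSubgraph G (fvsColoring G A)).Adj x y →
      x ∉ A ∧ w ∈ (G.induce Aᶜ).spanningCoe.ancestors x →
      y ∉ A ∧ w ∈ (G.induce Aᶜ).spanningCoe.ancestors y := by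
    rintro x y hxy ⟨hx, hwx⟩
    refine ⟨mt (mem_iff_mem_of_monoAdj hxy).mpr hx, ?_⟩
    rcases ancestors_eq_append_of_adj hF' (spanningCoe_adj_of_monoAdj hxy hx) with h | h
    · exact h ▸ List.mem_append_left _ hwx
    · rw [h, List.mem_append, List.mem_singleton] at hwx
      rcases hwx with hwy | rfl
      · exact hwy
      · exact absurd h (hno y hxy.symm)
  have hwt' := (hwt.of_forall_adj_imp hclosed ⟨hw, mem_ancestors_self w⟩).2
  exact absurd hdepth (not_le.mpr (length_ancestors_lt hF' hwt' hne))

lemma exists_isAnchoredTree (hF : (G.induce Aᶜ).IsAcyclic) {v : V} (hv : v ∉ A) :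
    ∃ t par nbr depth, IsAnchoredTree G A
      {w | (monoSubgraph G (fvsColoring G A)).Reachable v w} t par nbr depth := by
  set U := {w | (monoSubgraph G (fvsColoring G A)).Reachable v w}
  set depth := fun x => ((G.induce Aᶜ).spanningCoe.ancestors x).length
  obtain ⟨t, htU, htmin⟩ := (measure depth).wf.has_min U ⟨v, Reachable.refl v⟩
  have hUA : Disjoint U A :=
    Set.disjoint_left.mpr fun w hw => (mem_iff_mem_of_monoReachable hw).not.mp hv
  have hparent (w) (hw : w ∈ U) (hwt : w ≠ t) :
      ∃ u ∈ U, (monoSubgraph G (fvsColoring G A)).Adj u w ∧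
        (G.induce Aᶜ).spanningCoe.ancestors w = (G.induce Aᶜ).spanningCoe.ancestors u ++ [w] := by
    have hvw : (monoSubgraph G (fvsColoring G A)).Reachable v w := hw
    obtain ⟨u, hu, h⟩ := exists_monoAdj_parent hF (hUA.notMem_of_mem_left hw)
      (hvw.symm.trans htU) hwt (not_lt.mp (htmin w hw))
    exact ⟨u, hvw.trans hu.symm.reachable, hu, h⟩
  have hpar : ∀ w ∈ U, w ≠ t → ∃ u, u ∈ U ∧ G.Adj u w ∧ depth u < depth w := by
    intro w hw hwt
    obtain ⟨u, huU, hu, h⟩ := hparent w hw hwt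
    exact ⟨u, huU, hu.1, by simp [depth, h]⟩
  have hnbr : ∀ w ∈ U, w ≠ t → ∃ a, a ∈ A ∧ G.Adj w a := by
    intro w hw hwt
    obtain ⟨u, huU, hu, h⟩ := hparent w hw hwt
    by_contra hwA
    exact fvsColoring_ne_of_ancestors_eq (hUA.notMem_of_mem_left huU)
      (hUA.notMem_of_mem_left hw) (by simpa using hwA) h hu.2.symm
  choose! par hparU hparAdj hparDepth using hpar
  choose! nbr hnbrA hnbrAdj using hnbr
  exact ⟨t, par, nbr, depth, htU, hUA, hparU, hparAdj, hparDepth, hnbrA, hnbrAdj⟩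

theorem ncard_monoReachable_fvsColoring_le (hF : (G.induce Aᶜ).IsAcyclic)
    (hg : (7 : ℕ∞) ≤ G.egirth) (hA : A.Finite) (v : V) :
    {w | (monoSubgraph G (fvsColoring G A)).Reachable v w}.ncard ≤
      A.ncard.choose 2 + A.ncard + 1 := by
  by_cases hv : v ∈ A
  · calc _ ≤ A.ncard :=
          ncard_le_ncard (fun w hw => (mem_iff_mem_of_monoReachable hw).mp hv) hA
      _ ≤ _ := by omega
  obtain ⟨t, par, nbr, depth, hT⟩ := exists_isAnchoredTree hF hv
  exact hT.ncard_le hg hA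

end FvsColoring

end SimpleGraph

theorem stmt5_general {V : Type*} (k : ℕ) (G : SimpleGraph V)
    (h1 : FvnLE G k) (h2 : (7 : ℕ∞) ≤ G.egirth) :
    ∃ C : V → Fin 2, HasClustering G C (k.choose 2 + k + 1) := by
  obtain ⟨A, hA, hAk, hF⟩ := h1
  refine ⟨fvsColoring G A, fun v => ?_⟩
  calc _ ≤ A.ncard.choose 2 + A.ncard + 1 := ncard_monoReachable_fvsColoring_le hF h2 hA v
    _ ≤ k.choose 2 + k + 1 := by gcongr

/-- every graph with feedback vertex number at most `k` and girth at least 7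
is 2-colourable with clustering `C(k,2) + k + 1`. -/
theorem stmt5 {V : Type*} [Fintype V] (k : ℕ) (G : SimpleGraph V)
    (h1 : FvnLE G k) (h2 : (7 : ℕ∞) ≤ G.egirth) :
    ∃ C : V → Fin 2, HasClustering G C (k.choose 2 + k + 1) :=
  stmt5_general k G h1 h2
end

section
/- Let s,t ≥ 1 and let G be a graph with no K_{s,t} subgraph. Then G admits a proper-in-part s-colouring with defect at most col_2(G) + (t−1)·C(col_2(G), s−1); that is, an s-colouring in which every monochromatic component has maximum degree at most col_2(G) + (t−1)·C(col_2(G), s−1). -/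
open SimpleGraph Set

/-! The colouring is built greedily along an order witnessing `col₂(G)`. A vertex `u` takes a
colour missing from its back-neighbours if there is one; otherwise it takes the colour whose
earliest back-neighbour is latest. Back-neighbours of `v` in its own colour are 2-reachable
from `v`, so there are fewer than `col₂(G)` of them. If `u` is a later neighbour of `v` of the
same colour, `u` had no colour to spare, and its earliest back-neighbours of the other `s - 1`
colours all come before `v`, hence are 2-reachable from `v` through `u`. So every such `u` is
adjacent to an `(s - 1)`-set of vertices 2-reachable from `v`; if there were more than
`(t - 1) · C(col₂(G), s - 1)` of them, `t` would share the same set, which together with `v`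
spans a `K_{s,t}`. -/

theorem exists_forall_wellFounded_choice {V α : Type*} [LT V] [WellFoundedLT V] [Nonempty α]
    (P : V → (V → α) → α → Prop) (hP : ∀ v f g c, (∀ w < v, f w = g w) → P v f c → P v g c)
    (hex : ∀ v f, ∃ c, P v f c) : ∃ C : V → α, ∀ v, P v C (C v) := by
  classical
  let C : V → α := wellFounded_lt.fix fun v ih =>
    Classical.choose (hex v fun w => if h : w < v then ih w h else Classical.arbitrary α)
  refine ⟨C, fun v => ?_⟩
  have hCv : C v = Classical.choose
      (hex v fun w => if w < v then C w else Classical.arbitrary α) :=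
    WellFounded.fix_eq _ _ _
  rw [hCv]
  exact hP v _ _ _ (fun w hw => by simp [hw]) (Classical.choose_spec (hex v _))

section GreedyColouring

variable {V α : Type*} [LinearOrder V] (G : SimpleGraph V)

def IsGreedyColour (f : V → α) (v : V) (c : α) : Prop :=
  (∀ w, G.Adj v w → w < v → f w ≠ c) ∨
  ∀ c', ∃ w, G.Adj v w ∧ w < v ∧ f w = c' ∧ ∀ w', G.Adj v w' → w' < v → f w' = c → w ≤ w'

variable {G}

theorem IsGreedyColour.congr {f g : V → α} {v : V} {c : α} (hfg : ∀ w < v, f w = g w)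
    (h : IsGreedyColour G f v c) : IsGreedyColour G g v c := by
  rcases h with h | h
  · exact Or.inl fun w hw hlt => hfg w hlt ▸ h w hw hlt
  · refine Or.inr fun c' => ?_
    obtain ⟨w, hw, hlt, hc', hmin⟩ := h c'
    exact ⟨w, hw, hlt, hfg w hlt ▸ hc', fun w' hw' hlt' hc => hmin w' hw' hlt' (hfg w' hlt' ▸ hc)⟩

theorem exists_isGreedyColour [Fintype V] [Finite α] [Nonempty α] (v : V) (f : V → α) :
    ∃ c, IsGreedyColour G f v c := by
  classical
  by_cases hall : ∀ c', ∃ w, G.Adj v w ∧ w < v ∧ f w = c'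
  · let back (c' : α) := Finset.univ.filter fun w => G.Adj v w ∧ w < v ∧ f w = c'
    have hback (c') : (back c').Nonempty := by
      obtain ⟨w, hw⟩ := hall c'
      exact ⟨w, by simpa [back] using hw⟩
    obtain ⟨c, hc⟩ := Finite.exists_max fun c' => (back c').min' (hback c')
    refine ⟨c, Or.inr fun c' => ?_⟩
    have hmem := Finset.min'_mem _ (hback c')
    simp only [back, Finset.mem_filter, Finset.mem_univ, true_and] at hmem
    refine ⟨_, hmem.1, hmem.2.1, hmem.2.2, fun w' hw' hlt hcol => ?_⟩
    exact (hc c').trans (Finset.min'_le _ _ (by simp [back, hw', hlt, hcol]))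
  · push Not at hall
    obtain ⟨c, hc⟩ := hall
    exact ⟨c, Or.inl fun w hw hlt => hc w hw hlt⟩

theorem exists_forall_isGreedyColour [Fintype V] [Finite α] [Nonempty α] :
    ∃ C : V → α, ∀ v, IsGreedyColour G C v (C v) :=
  exists_forall_wellFounded_choice _ (fun _ _ _ _ => IsGreedyColour.congr)
    exists_isGreedyColour

theorem IsGreedyColour.exists_twoReach_finset [Fintype α] {C : V → α} {u v : V}
    (hC : IsGreedyColour G C u (C u)) (hvu : G.Adj v u) (hlt : v < u)
    (hcol : C u = C v) :
    ∃ S : Finset V, S.card = Fintype.card α - 1 ∧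
      (∀ w ∈ S, w ≠ v ∧ TwoReach G (· ≤ ·) v w) ∧ ∀ w ∈ S, G.Adj u w := by
  classical
  rcases hC with hfree | hfull
  · exact absurd hcol.symm (hfree v hvu.symm hlt)
  choose first hadj _ hcol_first hfirst_le using hfull
  have hinj : Set.InjOn first (Finset.univ.erase (C u) : Set α) := fun c₁ _ c₂ _ he => by
    rw [← hcol_first c₁, ← hcol_first c₂, he]
  refine ⟨(Finset.univ.erase (C u)).image first, ?_, ?_, ?_⟩
  · rw [Finset.card_image_of_injOn hinj, Finset.card_erase_of_mem (Finset.mem_univ _),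
      Finset.card_univ]
  · simp only [Finset.mem_image, Finset.mem_erase, Finset.mem_univ, and_true]
    rintro _ ⟨c', hc', rfl⟩
    have hle : first c' ≤ v := hfirst_le c' v hvu.symm hlt hcol.symm
    have hne : first c' ≠ v := fun he => hc' (by rw [← hcol_first c', he, hcol])
    exact ⟨hne, Or.inr ⟨hle, Or.inr ⟨u, hlt.le, hlt.ne', hvu, hadj c'⟩⟩⟩
  · simp only [Finset.mem_image]
    rintro _ ⟨c', -, rfl⟩
    exact hadj c'

end GreedyColouring

theorem hasKstSubgraph_of_lt_card {V : Type*} [DecidableEq V] {G : SimpleGraph V} {v : V}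
    {T F : Finset V} {k s t : ℕ} (hT : T.card ≤ k) (hvT : v ∉ T) (hvF : v ∉ F)
    (hTF : Disjoint T F) (hadj : ∀ u ∈ F, G.Adj v u)
    (hS : ∀ u ∈ F, ∃ S ⊆ T, S.card = s ∧ ∀ w ∈ S, G.Adj u w)
    (hF : (t - 1) * k.choose s < F.card) : HasKstSubgraph G (s + 1) t := by
  choose! S hST hS_card hS_adj using hS
  have hmaps : ∀ u ∈ F, S u ∈ T.powersetCard s := fun u hu =>
    Finset.mem_powersetCard.mpr ⟨hST u hu, hS_card u hu⟩
  have hcard : (T.powersetCard s).card * (t - 1) < F.card := by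
    calc (T.powersetCard s).card * (t - 1) ≤ k.choose s * (t - 1) := by
          rw [Finset.card_powersetCard]
          exact Nat.mul_le_mul_right _ (Nat.choose_le_choose _ hT)
      _ < F.card := by rwa [mul_comm]
  obtain ⟨A, hA, hfiber⟩ := Finset.exists_lt_card_fiber_of_mul_lt_card_of_maps_to hmaps hcard
  obtain ⟨hAT, hA_card⟩ := Finset.mem_powersetCard.mp hA
  obtain ⟨B, hB, hB_card⟩ :=
    Finset.exists_subset_card_eq (s := F.filter fun u => S u = A) (n := t) (by omega)
  have hBF : B ⊆ F := hB.trans (Finset.filter_subset _ _)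
  refine ⟨insert v A, B, ?_, ?_, hB_card, ?_⟩
  · rw [Finset.disjoint_insert_left]
    exact ⟨fun hv => hvF (hBF hv), (hTF.mono_left hAT).mono_right hBF⟩
  · rw [Finset.card_insert_of_notMem fun hv => hvT (hAT hv), hA_card]
  · intro a ha b hb
    rcases Finset.mem_insert.mp ha with rfl | ha
    · exact hadj b (hBF hb)
    · have hSb : S b = A := (Finset.mem_filter.mp (hB hb)).2
      exact (hS_adj b (hBF hb) a (hSb ▸ ha)).symm

theorem exists_hasDefect_of_twoReach_ncard_le {V α : Type*} [Fintype V] [LinearOrder V]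
    [Fintype α] [Nonempty α] (G : SimpleGraph V) (t k : ℕ)
    (h : ¬ HasKstSubgraph G (Fintype.card α) t)
    (hk : ∀ v, {w | TwoReach G (· ≤ ·) v w}.ncard ≤ k) :
    ∃ C : V → α, HasDefect G C (k + (t - 1) * k.choose (Fintype.card α - 1)) := by
  classical
  obtain ⟨C, hC⟩ := exists_forall_isGreedyColour (G := G) (α := α)
  refine ⟨C, fun v => ?_⟩
  let back := Finset.univ.filter fun w => G.Adj v w ∧ C w = C v ∧ w < v
  let fwd := Finset.univ.filter fun u => G.Adj v u ∧ C u = C v ∧ v < u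
  let T := (Finset.univ.filter (TwoReach G (· ≤ ·) v)).erase v
  have hreach : (Finset.univ.filter (TwoReach G (· ≤ ·) v)).card ≤ k := by
    simpa [← Set.ncard_coe_finset] using hk v
  have hsplit : {w | G.Adj v w ∧ C w = C v} ⊆ ↑(back ∪ fwd) := by
    intro w ⟨hvw, hcol⟩
    rcases lt_or_gt_of_ne hvw.ne' with hlt | hgt
    · simp [back, hvw, hcol, hlt]
    · simp [fwd, hvw, hcol, hgt]
  have hback : back.card ≤ k :=
    (Finset.card_le_card fun w hw => by
      simp only [back, Finset.mem_filter] at hw ⊢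
      exact ⟨hw.1, Or.inr ⟨hw.2.2.2.le, Or.inl hw.2.1⟩⟩).trans hreach
  have hfwd : fwd.card ≤ (t - 1) * k.choose (Fintype.card α - 1) := by
    by_contra! hlarge
    refine h ?_
    rw [← Nat.sub_add_cancel (Fintype.card_pos (α := α))]
    refine hasKstSubgraph_of_lt_card (v := v) (T := T) ((Finset.card_erase_le).trans hreach)
      (by simp [T]) (by simp [fwd]) ?_ (fun u hu => (Finset.mem_filter.mp hu).2.1) ?_ hlarge
    · rw [Finset.disjoint_left]
      intro w hwT hwF
      simp only [T, fwd, Finset.mem_erase, Finset.mem_filter, Finset.mem_univ, true_and] at hwT hwF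
      rcases hwT with ⟨hne, rfl | ⟨hle, -⟩⟩
      · exact hne rfl
      · exact (lt_of_le_of_ne hle hne).not_gt hwF.2.2
    · intro u hu
      simp only [fwd, Finset.mem_filter, Finset.mem_univ, true_and] at hu
      obtain ⟨S, hS_card, hS_reach, hS_adj⟩ := (hC u).exists_twoReach_finset hu.1 hu.2.2 hu.2.1
      exact ⟨S, fun w hw => by simpa [T] using hS_reach w hw, hS_card, hS_adj⟩
  calc {w | G.Adj v w ∧ C w = C v}.ncard ≤ (back ∪ fwd).card := by
        simpa only [Set.ncard_coe_finset] using Set.ncard_le_ncard hsplit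
    _ ≤ back.card + fwd.card := Finset.card_union_le _ _
    _ ≤ _ := Nat.add_le_add hback hfwd

noncomputable abbrev IsLinearOrder.toLinearOrder {V : Type*} (r : V → V → Prop)
    [IsLinearOrder V r] : LinearOrder V where
  le := r
  le_refl := refl_of r
  le_trans _ _ _ := trans_of r
  le_antisymm _ _ := antisymm_of r
  le_total := total_of r
  toDecidableLE := Classical.decRel r

theorem exists_isLinearOrder_twoReach_ncard_le_col2 {V : Type*} [Finite V] (G : SimpleGraph V) :
    ∃ r, IsLinearOrder V r ∧ ∀ v, {w | TwoReach G r v w}.ncard ≤ col2 G := by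
  classical
  let _ : LinearOrder V := linearOrderOfSTO WellOrderingRel
  exact Nat.sInf_mem (s := {m | ∃ r, IsLinearOrder V r ∧ ∀ v, {w | TwoReach G r v w}.ncard ≤ m})
    ⟨Nat.card V, (· ≤ ·), inferInstance, fun v => Set.ncard_le_card _⟩

theorem stmt6_general {V : Type*} [Fintype V] (s t : ℕ) (hs : 1 ≤ s)
    (G : SimpleGraph V) (h : ¬ HasKstSubgraph G s t) :
    ∃ C : V → Fin s,
      HasDefect G C (col2 G + (t - 1) * (col2 G).choose (s - 1)) := by
  obtain ⟨r, hr, hreach⟩ := exists_isLinearOrder_twoReach_ncard_le_col2 G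
  let _ := IsLinearOrder.toLinearOrder r
  have : NeZero s := ⟨by omega⟩
  simpa using exists_hasDefect_of_twoReach_ncard_le (α := Fin s) G t (col2 G)
    (by simpa using h) hreach

/-- every `K_{s,t}`-subgraph-free graph is `s`-colourable with defect at most
`col₂(G) + (t-1) * C(col₂(G), s-1)`. -/
theorem stmt6 {V : Type*} [Fintype V] (s t : ℕ) (hs : 1 ≤ s) (ht : 1 ≤ t)
    (G : SimpleGraph V) (h : ¬ HasKstSubgraph G s t) :
    ∃ C : V → Fin s,
      HasDefect G C (col2 G + (t - 1) * (col2 G).choose (s - 1)) :=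
  stmt6_general s t hs G h
end

section
/- For all integers γ, k ≥ 0, every n-vertex graph G with girth at least 5 that has a vertex set A of size at most k with G−A of Euler genus at most γ satisfies |E(G)| ≤ (8/3)n + (5/3)γ + (k+1)·C(k,2). -/
open SimpleGraph Set

/-!
Split `E(G)` into the edges of `G - A` and the edges meeting `A`. The former number at most
`(5/3)(n + γ)` by the Euler bound (trivially when `G - A` has fewer than four vertices).
The latter number at most `∑_{a ∈ A} deg a = ∑_w |N(w) ∩ A|`. As `G` has no 4-cycle, two
vertices of `A` have at most one common neighbour, so `∑_w C(|N(w) ∩ A|, 2) ≤ C(|A|, 2)`;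
together with `m ≤ 1 + k·C(m, 2)` for `m ≤ k` this gives `∑_w |N(w) ∩ A| ≤ n + k·C(k, 2)`.
-/

open Finset

namespace SimpleGraph

variable {V : Type*} {G : SimpleGraph V}

lemma eq_of_adj_of_five_le_egirth (hg : 5 ≤ G.egirth) {a b w w' : V} (hab : a ≠ b)
    (hwa : G.Adj w a) (hwb : G.Adj w b) (hw'a : G.Adj w' a) (hw'b : G.Adj w' b) : w = w' := by
  by_contra hww'
  let c : G.Walk a a := .cons hwa.symm (.cons hwb (.cons hw'b.symm (.cons hw'a .nil)))
  have hc : c.IsCycle := by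
    simp only [c, Walk.cons_isCycle_iff, Walk.cons_isPath_iff]
    simp [hab, hab.symm, hww', hwa.ne, hwb.ne, hw'a.ne, hwa.ne.symm, hw'b.ne.symm]
  have := egirth_le_length hc |>.trans' hg
  norm_num [c] at this

lemma ncard_edgeSet_le_choose_two [Finite V] (G : SimpleGraph V) :
    G.edgeSet.ncard ≤ (Nat.card V).choose 2 := by
  classical
  have := Fintype.ofFinite V
  rw [← coe_edgeFinset, Set.ncard_coe_finset, Nat.card_eq_fintype_card]
  exact card_edgeFinset_le_card_choose_two

lemma ncard_edgeSet_le_of_euler_bound [Finite V] (G : SimpleGraph V) (γ : ℕ)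
    (h : 4 ≤ Nat.card V → (G.edgeSet.ncard : ℚ) ≤ 5/3 * (Nat.card V + γ - 2)) :
    (G.edgeSet.ncard : ℚ) ≤ 5/3 * (Nat.card V + γ) := by
  rcases le_or_gt 4 (Nat.card V) with hV | hV
  · linarith [h hV]
  · have hsmall : (Nat.card V).choose 2 ≤ Nat.card V := by interval_cases Nat.card V <;> decide
    have : (G.edgeSet.ncard : ℚ) ≤ Nat.card V := by
      exact_mod_cast (ncard_edgeSet_le_choose_two G).trans hsmall
    have : (0 : ℚ) ≤ γ := γ.cast_nonneg
    linarith

variable [Fintype V] [DecidableRel G.Adj]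

lemma sum_choose_two_card_filter_adj_le (hg : 5 ≤ G.egirth) (s : Finset V) :
    ∑ w, (#{a ∈ s | G.Adj a w}).choose 2 ≤ (#s).choose 2 := by
  classical
  let r : V → Finset V → Prop := fun w p => ∀ a ∈ p, G.Adj a w
  calc ∑ w, (#{a ∈ s | G.Adj a w}).choose 2
      ≤ ∑ w, #((s.powersetCard 2).bipartiteAbove r w) := by
        gcongr with w
        rw [← card_powersetCard]
        refine card_le_card fun p hp => ?_
        rw [mem_powersetCard] at hp
        exact (mem_bipartiteAbove r).2
          ⟨mem_powersetCard.2 ⟨hp.1.trans (filter_subset _ _), hp.2⟩,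
            fun a ha => (Finset.mem_filter.1 (hp.1 ha)).2⟩
    _ = ∑ p ∈ s.powersetCard 2, #(univ.bipartiteBelow r p) :=
        sum_card_bipartiteAbove_eq_sum_card_bipartiteBelow r
    _ ≤ ∑ p ∈ s.powersetCard 2, 1 := by
        gcongr with p hp
        obtain ⟨a, b, hab, rfl⟩ := card_eq_two.1 (mem_powersetCard.1 hp).2
        refine card_le_one.2 fun w hw w' hw' => ?_
        simp only [mem_bipartiteBelow, r, Finset.mem_insert, Finset.mem_singleton,
          forall_eq_or_imp, forall_eq] at hw hw'
        exact eq_of_adj_of_five_le_egirth hg hab hw.2.1.symm hw.2.2.symm hw'.2.1.symm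
          hw'.2.2.symm
    _ = (#s).choose 2 := by simp

lemma le_one_add_mul_choose_two {m k : ℕ} (h : m ≤ k) : m ≤ 1 + k * m.choose 2 := by
  rcases lt_or_ge m 2 with hm | hm
  · omega
  · nlinarith [Nat.choose_pos hm (k := 2)]

lemma sum_degree_le_of_five_le_egirth (hg : 5 ≤ G.egirth) (s : Finset V) :
    ∑ a ∈ s, G.degree a ≤ Fintype.card V + #s * (#s).choose 2 := by
  classical
  calc ∑ a ∈ s, G.degree a = ∑ a ∈ s, #(univ.bipartiteAbove G.Adj a) := by
        simp [bipartiteAbove, ← card_neighborFinset_eq_degree, neighborFinset_eq_filter]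
    _ = ∑ w, #{a ∈ s | G.Adj a w} := sum_card_bipartiteAbove_eq_sum_card_bipartiteBelow _
    _ ≤ ∑ w : V, (1 + #s * (#{a ∈ s | G.Adj a w}).choose 2) :=
        sum_le_sum fun w _ => le_one_add_mul_choose_two (card_filter_le _ _)
    _ ≤ Fintype.card V + #s * (#s).choose 2 := by
        rw [sum_add_distrib, ← mul_sum]
        simpa using Nat.mul_le_mul_left _ (sum_choose_two_card_filter_adj_le hg s)

lemma ncard_edgeSet_le_ncard_edgeSet_induce_compl_add_sum_degree (s : Finset V) :
    G.edgeSet.ncard ≤ (G.induce (↑s)ᶜ).edgeSet.ncard + ∑ a ∈ s, G.degree a := by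
  classical
  have hcover : G.edgeSet ⊆
      Sym2.map Subtype.val '' (G.induce (↑s)ᶜ).edgeSet ∪ ⋃ a ∈ s, G.incidenceSet a := by
    intro e he
    induction e with | _ x y => ?_
    by_cases hx : x ∈ s
    · exact Or.inr (Set.mem_biUnion hx ⟨he, Sym2.mem_mk_left x y⟩)
    by_cases hy : y ∈ s
    · exact Or.inr (Set.mem_biUnion hy ⟨he, Sym2.mem_mk_right x y⟩)
    exact Or.inl ⟨s(⟨x, hx⟩, ⟨y, hy⟩), he, rfl⟩
  calc G.edgeSet.ncard
      ≤ (Sym2.map Subtype.val '' (G.induce (↑s)ᶜ).edgeSet).ncard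
        + (⋃ a ∈ s, G.incidenceSet a).ncard :=
        (Set.ncard_le_ncard hcover (Set.toFinite _)).trans (Set.ncard_union_le _ _)
    _ ≤ (G.induce (↑s)ᶜ).edgeSet.ncard + ∑ a ∈ s, (G.incidenceSet a).ncard :=
        add_le_add (Set.ncard_image_le (Set.toFinite _)) (s.set_ncard_biUnion_le _)
    _ = (G.induce (↑s)ᶜ).edgeSet.ncard + ∑ a ∈ s, G.degree a := by
        simp [← coe_incidenceFinset, card_incidenceFinset_eq_degree]

end SimpleGraph

/-- every `n`-vertex `(γ,k)`-apex graph with girth at least 5 has at most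
`(8/3)n + (5/3)γ + (k+1)·C(k,2)` edges. Euler genus at most `γ` of `G - A` is encoded
via its Euler-formula consequence: every induced subgraph of `G - A` on `m ≥ 4` vertices
(automatically of genus at most `γ` and girth at least 5) has at most `(5/3)(m+γ-2)` edges. -/
theorem stmt9 {V : Type*} [Fintype V] (γ k : ℕ) (G : SimpleGraph V) (A : Set V)
    (hA : A.ncard ≤ k) (hg : (5 : ℕ∞) ≤ G.egirth)
    (hgenus : ∀ s : Set V, s ⊆ Aᶜ → 4 ≤ s.ncard →
      ((G.induce s).edgeSet.ncard : ℚ) ≤ 5/3 * ((s.ncard : ℚ) + (γ : ℚ) - 2)) :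
    (G.edgeSet.ncard : ℚ) ≤
      8/3 * (Fintype.card V : ℚ) + 5/3 * (γ : ℚ) + ((k : ℚ) + 1) * (k.choose 2 : ℚ) := by
  classical
  have hsplit := ncard_edgeSet_le_ncard_edgeSet_induce_compl_add_sum_degree (G := G) A.toFinset
  rw [Set.coe_toFinset] at hsplit
  have hcross : ∑ a ∈ A.toFinset, G.degree a ≤ Fintype.card V + k * k.choose 2 := by
    have hAk : #A.toFinset ≤ k := by rwa [← Set.ncard_eq_toFinset_card']
    exact (sum_degree_le_of_five_le_egirth hg _).trans (by gcongr)
  have hcompl := ncard_edgeSet_le_of_euler_bound (G.induce Aᶜ) γ (by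
    simpa only [Nat.card_coe_set_eq] using hgenus Aᶜ subset_rfl)
  have hAc : (Aᶜ.ncard : ℚ) ≤ Fintype.card V := by
    exact_mod_cast (Set.ncard_le_ncard (Set.subset_univ Aᶜ)).trans_eq
      ((Set.ncard_univ V).trans Nat.card_eq_fintype_card)
  rw [Nat.card_coe_set_eq] at hcompl
  have hE : (G.edgeSet.ncard : ℚ) ≤
      (G.induce Aᶜ).edgeSet.ncard + Fintype.card V + k * k.choose 2 := by
    exact_mod_cast hsplit.trans (by omega)
  have hchoose : (0 : ℚ) ≤ k.choose 2 := Nat.cast_nonneg _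
  linarith
end
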